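/- arXiv:2305.15232 — 2 statements merged into one kernel-verified Lean document; each statement's English description precedes it below -/
import Mathlib

section
/- Let 0 < η < 1 with η ≠ 2/3, let b ∈ ℝ and g ∈ ℝ, and define f̃(t) = (t − b)^(η−1) − g·(t − b)^(1−2η) for t > b. Then f̃ solves the fractional vacuum field equation: for every x > b, (x − b)^η · (−Γ(2−3η)/Γ(2−2η)) · d/dx [ (1/Γ(1−η)) ∫ᵇˣ f̃(t) · (x − t)^(−η) dt ] + f̃(x) − (x − b)^(η−1) = 0. -/
open MeasureTheory intervalIntegral Real

lemma beta_ii {p q : ℝ} (hp : 0 < p) (hq : 0 < q) {b y : ℝ} (hby : b < y) :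
    IntervalIntegrable (fun t => (t - b) ^ (p - 1) * (y - t) ^ (q - 1)) volume b y := by
  set m := (b + y) / 2 with hm
  have hbm : b < m := by simp only [hm]; linarith
  have hmy : m < y := by simp only [hm]; linarith
  have h1 : IntervalIntegrable (fun t => (t - b) ^ (p - 1) * (y - t) ^ (q - 1)) volume b m := by
    have hf : IntervalIntegrable (fun t : ℝ => (t - b) ^ (p - 1)) volume b m := by
      have := (intervalIntegrable_rpow' (a := 0) (b := m - b) (by linarith : (-1:ℝ) < p - 1)).comp_sub_right b
      simpa using this
    refine hf.mul_continuousOn ?_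
    apply ContinuousOn.rpow_const (by fun_prop)
    intro t ht
    rw [Set.uIcc_of_le hbm.le] at ht
    exact Or.inl (by have := ht.2; intro h; nlinarith [sub_eq_zero.mp h])
  have h2 : IntervalIntegrable (fun t => (t - b) ^ (p - 1) * (y - t) ^ (q - 1)) volume m y := by
    have hf : IntervalIntegrable (fun t : ℝ => (y - t) ^ (q - 1)) volume m y := by
      have := (intervalIntegrable_rpow' (a := y - m) (b := 0) (by linarith : (-1:ℝ) < q - 1)).comp_sub_left y
      simpa using this
    refine hf.continuousOn_mul ?_
    apply ContinuousOn.rpow_const (by fun_prop)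
    intro t ht
    rw [Set.uIcc_of_le hmy.le] at ht
    exact Or.inl (by have := ht.1; intro h; nlinarith [sub_eq_zero.mp h])
  exact h1.trans h2

lemma real_beta {p q : ℝ} (hp : 0 < p) (hq : 0 < q) :
    ∫ s in (0:ℝ)..1, s ^ (p - 1) * (1 - s) ^ (q - 1)
      = Real.Gamma p * Real.Gamma q / Real.Gamma (p + q) := by
  have hkey := Complex.Gamma_mul_Gamma_eq_betaIntegral (s := p) (t := q) (by simpa using hp) (by simpa using hq)
  have hre : Complex.betaIntegral p q = ((∫ s in (0:ℝ)..1, s ^ (p - 1) * (1 - s) ^ (q - 1) : ℝ) : ℂ) := by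
    rw [Complex.betaIntegral, ← intervalIntegral.integral_ofReal]
    refine intervalIntegral.integral_congr fun s hs => ?_
    rw [Set.uIcc_of_le zero_le_one] at hs
    rw [Complex.ofReal_mul, Complex.ofReal_cpow hs.1, Complex.ofReal_cpow (by linarith [hs.2])]
    push_cast
    ring
  rw [hre, ← Complex.ofReal_add, Complex.Gamma_ofReal, Complex.Gamma_ofReal, Complex.Gamma_ofReal,
    ← Complex.ofReal_mul, ← Complex.ofReal_mul] at hkey
  have := Complex.ofReal_inj.mp hkey
  have hG : Real.Gamma (p + q) ≠ 0 := (Real.Gamma_pos_of_pos (by linarith)).ne'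
  field_simp
  linarith [this]

lemma beta_shifted {p q : ℝ} (b y : ℝ) (hby : b < y) :
    ∫ t in b..y, (t - b) ^ (p - 1) * (y - t) ^ (q - 1)
      = (y - b) ^ (p + q - 1) * ∫ s in (0:ℝ)..1, s ^ (p - 1) * (1 - s) ^ (q - 1) := by
  have hc : y - b ≠ 0 := by linarith
  have hsub := intervalIntegral.integral_comp_mul_add
    (f := fun t => (t - b) ^ (p - 1) * (y - t) ^ (q - 1)) (a := 0) (b := 1) hc b
  simp only [mul_zero, zero_add, mul_one, sub_add_cancel] at hsub
  rw [show ∫ t in b..y, (t - b) ^ (p - 1) * (y - t) ^ (q - 1)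
      = (y - b) • ∫ s in (0:ℝ)..1, ((y - b) * s + b - b) ^ (p - 1) * (y - ((y - b) * s + b)) ^ (q - 1) by
    rw [hsub, smul_smul, mul_inv_cancel₀ hc, one_smul]]
  rw [smul_eq_mul, ← intervalIntegral.integral_const_mul]
  rw [show (y - b) ^ (p + q - 1) * ∫ s in (0:ℝ)..1, s ^ (p - 1) * (1 - s) ^ (q - 1)
      = ∫ s in (0:ℝ)..1, (y - b) ^ (p + q - 1) * (s ^ (p - 1) * (1 - s) ^ (q - 1)) from
    (intervalIntegral.integral_const_mul _ _).symm]
  refine intervalIntegral.integral_congr fun s hs => ?_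
  rw [Set.uIcc_of_le zero_le_one] at hs
  have h1 : (y - b) * s + b - b = (y - b) * s := by ring
  have h2 : y - ((y - b) * s + b) = (y - b) * (1 - s) := by ring
  have hyb : (0:ℝ) < y - b := by linarith
  rw [h1, h2, Real.mul_rpow hyb.le hs.1, Real.mul_rpow hyb.le (by linarith [hs.2])]
  have key : (y - b) * ((y - b) ^ (p - 1) * (y - b) ^ (q - 1)) = (y - b) ^ (p + q - 1) := by
    nth_rw 1 [← Real.rpow_one (y - b)]
    rw [← Real.rpow_add hyb, ← Real.rpow_add hyb]
    ring_nf
  calc (y - b) * ((y - b) ^ (p - 1) * s ^ (p - 1) * ((y - b) ^ (q - 1) * (1 - s) ^ (q - 1)))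
      = (y - b) * ((y - b) ^ (p - 1) * (y - b) ^ (q - 1)) * (s ^ (p - 1) * (1 - s) ^ (q - 1)) := by ring
    _ = (y - b) ^ (p + q - 1) * (s ^ (p - 1) * (1 - s) ^ (q - 1)) := by rw [key]

/-- The function `f̃(t) = (t − b)^(η−1) − g(t − b)^(1−2η)` solves the
fractional vacuum field equation
`(x − b)^η 𝔇_q^η f̃ + f̃ − (x − b)^(η−1) = 0` for every `x > b`, where `𝔇_q^η` is the
weighted left-sided Riemann–Liouville derivative. -/
theorem fractional_vacuum_solution (η b g : ℝ)
    (hη0 : 0 < η) (hη1 : η < 1) (hη23 : η ≠ 2 / 3) :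
    ∀ x : ℝ, b < x →
      (x - b) ^ η * ((-Real.Gamma (2 - 3 * η) / Real.Gamma (2 - 2 * η)) *
        deriv (fun y : ℝ =>
          (1 / Real.Gamma (1 - η)) *
            ∫ t in b..y, ((t - b) ^ (η - 1) - g * (t - b) ^ (1 - 2 * η)) * (y - t) ^ (-η)) x)
      + ((x - b) ^ (η - 1) - g * (x - b) ^ (1 - 2 * η))
      - (x - b) ^ (η - 1) = 0 := by
  intro x hx
  have hq : (0:ℝ) < 1 - η := by linarith
  have hp2 : (0:ℝ) < 2 - 2 * η := by linarith
  have hmη : -η = (1 - η) - 1 := by ring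
  have h12 : 1 - 2 * η = (2 - 2 * η) - 1 := by ring
  set K1 : ℝ := Real.Gamma η * Real.Gamma (1 - η) / Real.Gamma 1 with hK1
  set K2 : ℝ := Real.Gamma (2 - 2 * η) * Real.Gamma (1 - η) / Real.Gamma (3 - 3 * η) with hK2
  have hint : ∀ y : ℝ, b < y →
      (∫ t in b..y, ((t - b) ^ (η - 1) - g * (t - b) ^ (1 - 2 * η)) * (y - t) ^ (-η))
        = K1 - g * K2 * (y - b) ^ (2 - 3 * η) := by
    intro y hy
    have hA : IntervalIntegrable (fun t => (t - b) ^ (η - 1) * (y - t) ^ (-η)) volume b y := by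
      simp only [hmη]; exact beta_ii hη0 hq hy
    have hB : IntervalIntegrable (fun t => (t - b) ^ (1 - 2 * η) * (y - t) ^ (-η)) volume b y := by
      simp only [hmη, h12]; exact beta_ii hp2 hq hy
    have hsplit : (fun t => ((t - b) ^ (η - 1) - g * (t - b) ^ (1 - 2 * η)) * (y - t) ^ (-η))
        = fun t => (t - b) ^ (η - 1) * (y - t) ^ (-η)
            - g * ((t - b) ^ (1 - 2 * η) * (y - t) ^ (-η)) := by funext t; ring
    rw [intervalIntegral.integral_congr (g := fun t => (t - b) ^ (η - 1) * (y - t) ^ (-η)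
          - g * ((t - b) ^ (1 - 2 * η) * (y - t) ^ (-η))) (fun t _ => by ring),
      intervalIntegral.integral_sub hA (hB.const_mul g), intervalIntegral.integral_const_mul]
    have e1 : ∫ t in b..y, (t - b) ^ (η - 1) * (y - t) ^ (-η) = K1 := by
      simp only [hmη]
      rw [beta_shifted b y hy, real_beta hη0 hq]
      rw [show η + (1 - η) - 1 = (0:ℝ) by ring, Real.rpow_zero, one_mul,
        show η + (1 - η) = (1:ℝ) by ring]
    have e2 : ∫ t in b..y, (t - b) ^ (1 - 2 * η) * (y - t) ^ (-η)
        = (y - b) ^ (2 - 3 * η) * K2 := by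
      simp only [hmη, h12]
      rw [beta_shifted b y hy, real_beta hp2 hq]
      rw [show 2 - 2 * η + (1 - η) - 1 = 2 - 3 * η by ring,
        show 2 - 2 * η + (1 - η) = 3 - 3 * η by ring]
    rw [e1, e2]; ring
  have hxb : (0:ℝ) < x - b := by linarith
  have hG : deriv (fun y : ℝ =>
        (1 / Real.Gamma (1 - η)) *
          ∫ t in b..y, ((t - b) ^ (η - 1) - g * (t - b) ^ (1 - 2 * η)) * (y - t) ^ (-η)) x
      = (1 / Real.Gamma (1 - η)) *
          (0 - g * K2 * ((2 - 3 * η) * (x - b) ^ (2 - 3 * η - 1))) := by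
    have hevent : (fun y : ℝ =>
        (1 / Real.Gamma (1 - η)) *
          ∫ t in b..y, ((t - b) ^ (η - 1) - g * (t - b) ^ (1 - 2 * η)) * (y - t) ^ (-η))
        =ᶠ[nhds x] fun y : ℝ =>
          (1 / Real.Gamma (1 - η)) * (K1 - g * K2 * (y - b) ^ (2 - 3 * η)) := by
      filter_upwards [isOpen_Ioi.mem_nhds hx] with y hy
      rw [hint y hy]
    rw [hevent.deriv_eq]
    have hd : HasDerivAt (fun y : ℝ => (y - b) ^ (2 - 3 * η))
        ((2 - 3 * η) * (x - b) ^ (2 - 3 * η - 1)) x := by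
      have h1 : HasDerivAt (fun y : ℝ => y - b) 1 x := (hasDerivAt_id x).sub_const b
      have h2 := (Real.hasDerivAt_rpow_const (x := x - b) (p := 2 - 3 * η)
        (Or.inl hxb.ne')).comp x h1
      simpa [Function.comp_def] using h2
    have := (((hasDerivAt_const x K1).sub (hd.const_mul (g * K2))).const_mul
      (1 / Real.Gamma (1 - η))).deriv
    simpa [mul_assoc] using this
  rw [hG]
  have h23 : (2 : ℝ) - 3 * η ≠ 0 := fun h => hη23 (by linarith)
  have hΓ1 : Real.Gamma (1 - η) ≠ 0 := (Real.Gamma_pos_of_pos hq).ne'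
  have hΓ2 : Real.Gamma (2 - 2 * η) ≠ 0 := (Real.Gamma_pos_of_pos hp2).ne'
  have hΓ23 : Real.Gamma (2 - 3 * η) ≠ 0 := Real.Gamma_ne_zero (fun m => by
    cases m with
    | zero => simpa using h23
    | succ n => push_cast; intro h; have : (0:ℝ) ≤ (n:ℝ) := Nat.cast_nonneg n; nlinarith)
  have hrec : Real.Gamma (3 - 3 * η) = (2 - 3 * η) * Real.Gamma (2 - 3 * η) := by
    rw [show (3:ℝ) - 3 * η = (2 - 3 * η) + 1 by ring, Real.Gamma_add_one h23]
  have hpow : (x - b) ^ η * (x - b) ^ (2 - 3 * η - 1) = (x - b) ^ (1 - 2 * η) := by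
    rw [← Real.rpow_add hxb]; ring_nf
  rw [hK2, hrec]
  field_simp
  linear_combination (Real.Gamma (2 * (1 - η)) * Real.Gamma (1 - η) * g) * hpow
end

section
/- Let 0 < η < 1, set b = η − 1 and g = (2 − η)^(3η−2), and define f̃(x) = (x − b)^(η−1) − g·(x − b)^(1−2η). Then for every x with 0 < x < 1: f̃(x) > 0 if η < 2/3; f̃(x) < 0 if η > 2/3; and f̃(x) = 0 if η = 2/3. In particular the fractional interior metric is regular at x = 0 and mimics a gravastar for η < 2/3 and a regular black hole for η > 2/3. -/
/-!
Put `u = x - b` and `c = 2 - η`, so that `0 < u < c` inside the horizon. Since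
`η - 1 = (3η - 2) + (1 - 2η)`, the metric factors as `f̃ = (u^(3η-2) - c^(3η-2)) · u^(1-2η)`, and
the sign of the first factor is decided by the monotonicity of `t ↦ t^(3η-2)` on `(0, ∞)`:
decreasing for `η < 2/3`, increasing for `η > 2/3`, constant `1` for `η = 2/3`.
-/

namespace Real

variable {u c : ℝ}

theorem rpow_add_sub_mul_rpow (hu : 0 < u) (a b g : ℝ) :
    u ^ (a + b) - g * u ^ b = (u ^ a - g) * u ^ b := by
  rw [rpow_add hu]
  ring

theorem rpow_add_sub_rpow_mul_rpow_pos (hu : 0 < u) (huc : u < c) {e : ℝ} (he : e < 0)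
    (b : ℝ) : 0 < u ^ (e + b) - c ^ e * u ^ b := by
  rw [rpow_add_sub_mul_rpow hu]
  exact mul_pos (sub_pos.2 (rpow_lt_rpow_of_neg hu huc he)) (rpow_pos_of_pos hu b)

theorem rpow_add_sub_rpow_mul_rpow_neg (hu : 0 < u) (huc : u < c) {e : ℝ} (he : 0 < e)
    (b : ℝ) : u ^ (e + b) - c ^ e * u ^ b < 0 := by
  rw [rpow_add_sub_mul_rpow hu]
  exact mul_neg_of_neg_of_pos (sub_neg.2 (rpow_lt_rpow hu.le huc he)) (rpow_pos_of_pos hu b)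

end Real

theorem interior_metric_sign_general (η : ℝ) (hη1 : η < 1) :
    ∀ x : ℝ, 0 < x → x < 1 →
      (η < 2 / 3 →
        0 < (x - (η - 1)) ^ (η - 1) - (2 - η) ^ (3 * η - 2) * (x - (η - 1)) ^ (1 - 2 * η)) ∧
      (2 / 3 < η →
        (x - (η - 1)) ^ (η - 1) - (2 - η) ^ (3 * η - 2) * (x - (η - 1)) ^ (1 - 2 * η) < 0) ∧
      (η = 2 / 3 →
        (x - (η - 1)) ^ (η - 1) - (2 - η) ^ (3 * η - 2) * (x - (η - 1)) ^ (1 - 2 * η) = 0) := by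
  intro x hx0 hx1
  set u := x - (η - 1) with hu_def
  have hu : 0 < u := by linarith
  have huc : u < 2 - η := by linarith
  have hsplit : η - 1 = (3 * η - 2) + (1 - 2 * η) := by ring
  rw [hsplit]
  refine ⟨fun h ↦ Real.rpow_add_sub_rpow_mul_rpow_pos hu huc (by linarith) _,
    fun h ↦ Real.rpow_add_sub_rpow_mul_rpow_neg hu huc (by linarith) _, fun h ↦ ?_⟩
  have he : 3 * η - 2 = 0 := by linarith
  rw [he, zero_add, Real.rpow_zero, one_mul, sub_self]

/-- Sign of the fractional interior metric
`f̃(x) = (x − b)^(η−1) − g(x − b)^(1−2η)` with `b = η − 1`, `g = (2 − η)^(3η−2)`: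
inside the horizon (`0 < x < 1`) it is positive for `η < 2/3` (gravastar), negative
for `η > 2/3` (regular black hole), and zero for `η = 2/3`. -/
theorem interior_metric_sign (η : ℝ) (hη0 : 0 < η) (hη1 : η < 1) :
    ∀ x : ℝ, 0 < x → x < 1 →
      (η < 2 / 3 →
        0 < (x - (η - 1)) ^ (η - 1) - (2 - η) ^ (3 * η - 2) * (x - (η - 1)) ^ (1 - 2 * η)) ∧
      (2 / 3 < η →
        (x - (η - 1)) ^ (η - 1) - (2 - η) ^ (3 * η - 2) * (x - (η - 1)) ^ (1 - 2 * η) < 0) ∧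
      (η = 2 / 3 →
        (x - (η - 1)) ^ (η - 1) - (2 - η) ^ (3 * η - 2) * (x - (η - 1)) ^ (1 - 2 * η) = 0) :=
  interior_metric_sign_general η hη1
end
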